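/- Let B, c₂, c₃ ∈ ℝ and define P(α,β) := 1/(4π) − (3/(8π)) sin²β cos(2α) · B + [ (3/(16π)) sin⁴β cos(4α) + c₂ sin²β cos(2α) + c₃ sin²β sin(2α) ] · B². Then, with d(α,β) = (cos α sin β, sin α sin β, cos β), the second normal stress integral satisfies ∫₀^{2π} ∫₀^{π} ( d₂(α,β)² − d₃(α,β)² ) P(α,β) sin β dβ dα = (1/5) B − (8π/15) c₂ B². -/

import Mathlib

open MeasureTheory intervalIntegral

/-- The truncated asymptotic expansion (in the Bretherton constant `B`) of the
steady-state orientation distribution. -/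
noncomputable def Pexp (B c₂ c₃ α β : ℝ) : ℝ :=
  1 / (4 * Real.pi)
    - 3 / (8 * Real.pi) * Real.sin β ^ 2 * Real.cos (2 * α) * B
    + (3 / (16 * Real.pi) * Real.sin β ^ 4 * Real.cos (4 * α)
        + c₂ * Real.sin β ^ 2 * Real.cos (2 * α)
        + c₃ * Real.sin β ^ 2 * Real.sin (2 * α)) * B ^ 2

/-!
With `sin²α = (1 - cos 2α) / 2` and `cos²β = 1 - sin²β` the weight becomes
`d₂² - d₃² = 3/2 sin²β - 1 - 1/2 cos 2α sin²β`, so the integrand is a finite sum of products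
(trigonometric monomial in `α`) × `sin^(2k+1) β` and the double integral factors term by term.
By orthogonality on `[0, 2π]` only the constant mode and `cos²2α` have nonzero integral (`2π` and
`π`); with the odd sine moments `2, 4/3, 16/15` on `[0, π]` the isotropic contribution cancels and
only the term `-K/2 · cos²2α · sin⁵β`, `K = c₂B² - 3B/(8π)`, survives, giving `-8πK/15`.
-/

open Real

theorem integral_add_div_two {f g : ℝ → ℝ} (hf : Continuous f) (hg : Continuous g) (a b : ℝ) :
    ∫ x in a..b, (f x + g x) / 2 = ((∫ x in a..b, f x) + ∫ x in a..b, g x) / 2 := by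
  rw [intervalIntegral.integral_div,
    intervalIntegral.integral_add (hf.intervalIntegrable a b) (hg.intervalIntegrable a b)]

theorem integral_cos_int_mul_zero_two_pi {k : ℤ} (hk : k ≠ 0) :
    ∫ x in (0:ℝ)..2 * π, cos (k * x) = 0 := by
  have hk' : (k : ℝ) ≠ 0 := by exact_mod_cast hk
  simp [integral_comp_mul_left _ hk', sin_periodic.int_mul_eq]

theorem integral_sin_int_mul_zero_two_pi (k : ℤ) :
    ∫ x in (0:ℝ)..2 * π, sin (k * x) = 0 := by
  rcases eq_or_ne k 0 with rfl | hk
  · simp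
  have hk' : (k : ℝ) ≠ 0 := by exact_mod_cast hk
  simp [integral_comp_mul_left _ hk', cos_int_mul_two_pi]

theorem integral_cos_mul_cos_zero_two_pi {m n : ℤ} (hsub : m - n ≠ 0) (hadd : m + n ≠ 0) :
    ∫ x in (0:ℝ)..2 * π, cos (m * x) * cos (n * x) = 0 := by
  have h (x : ℝ) :
      cos (m * x) * cos (n * x) = (cos ((m - n : ℤ) * x) + cos ((m + n : ℤ) * x)) / 2 := by
    rw [Int.cast_sub, Int.cast_add, sub_mul, add_mul]
    linear_combination two_mul_cos_mul_cos (m * x) (n * x) / 2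
  simp_rw [h]
  rw [integral_add_div_two (by fun_prop) (by fun_prop), integral_cos_int_mul_zero_two_pi hsub,
    integral_cos_int_mul_zero_two_pi hadd]
  norm_num

theorem integral_cos_mul_self_zero_two_pi {n : ℤ} (hn : n ≠ 0) :
    ∫ x in (0:ℝ)..2 * π, cos (n * x) * cos (n * x) = π := by
  have h (x : ℝ) : cos (n * x) * cos (n * x) = (1 + cos ((2 * n : ℤ) * x)) / 2 := by
    rw [← sq, cos_sq, Int.cast_mul, Int.cast_two, mul_assoc]
    ring
  simp_rw [h]
  rw [integral_add_div_two (by fun_prop) (by fun_prop),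
    integral_cos_int_mul_zero_two_pi (mul_ne_zero two_ne_zero hn)]
  simp

theorem integral_cos_mul_sin_zero_two_pi (m n : ℤ) :
    ∫ x in (0:ℝ)..2 * π, cos (m * x) * sin (n * x) = 0 := by
  have h (x : ℝ) :
      cos (m * x) * sin (n * x) = (sin ((n - m : ℤ) * x) + sin ((n + m : ℤ) * x)) / 2 := by
    rw [Int.cast_sub, Int.cast_add, sub_mul, add_mul]
    linear_combination two_mul_sin_mul_cos (n * x) (m * x) / 2
  simp_rw [h]
  rw [integral_add_div_two (by fun_prop) (by fun_prop), integral_sin_int_mul_zero_two_pi,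
    integral_sin_int_mul_zero_two_pi]
  norm_num

theorem integral_sum_sum {ι κ : Type*} (s : Finset ι) (t : Finset κ) {h : ι → κ → ℝ → ℝ}
    (hh : ∀ i k, Continuous (h i k)) (a b : ℝ) :
    ∫ x in a..b, ∑ i ∈ s, ∑ k ∈ t, h i k x = ∑ i ∈ s, ∑ k ∈ t, ∫ x in a..b, h i k x := by
  rw [intervalIntegral.integral_finsetSum fun i _ =>
    (continuous_finsetSum _ fun k _ => hh i k).intervalIntegrable a b]
  exact Finset.sum_congr rfl fun i _ =>
    intervalIntegral.integral_finsetSum fun k _ => (hh i k).intervalIntegrable a b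

theorem integral_integral_sum_sum_mul {ι κ : Type*} (s : Finset ι) (t : Finset κ)
    (c : ι → κ → ℝ) {f : ι → ℝ → ℝ} {g : κ → ℝ → ℝ} (hf : ∀ i, Continuous (f i))
    (hg : ∀ k, Continuous (g k)) (a b a' b' : ℝ) :
    ∫ x in a..b, ∫ y in a'..b', ∑ i ∈ s, ∑ k ∈ t, c i k * f i x * g k y
      = ∑ i ∈ s, ∑ k ∈ t, c i k * (∫ x in a..b, f i x) * ∫ y in a'..b', g k y := by
  have inner (x : ℝ) : ∫ y in a'..b', ∑ i ∈ s, ∑ k ∈ t, c i k * f i x * g k y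
      = ∑ i ∈ s, ∑ k ∈ t, c i k * f i x * ∫ y in a'..b', g k y := by
    rw [integral_sum_sum s t (fun i k => by fun_prop)]
    simp only [intervalIntegral.integral_const_mul]
  simp_rw [inner]
  rw [integral_sum_sum s t (fun i k => by fun_prop)]
  simp only [intervalIntegral.integral_const_mul, intervalIntegral.integral_mul_const]

noncomputable def azimuthalMode : Fin 7 → ℝ → ℝ :=
  ![fun _ => 1, fun α => cos (2 * α), fun α => sin (2 * α), fun α => cos (4 * α),
    fun α => cos (2 * α) * cos (2 * α), fun α => cos (2 * α) * cos (4 * α),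
    fun α => cos (2 * α) * sin (2 * α)]

theorem continuous_azimuthalMode (i : Fin 7) : Continuous (azimuthalMode i) := by
  fin_cases i <;> simp [azimuthalMode] <;> fun_prop

theorem integral_azimuthalMode (i : Fin 7) :
    ∫ α in (0:ℝ)..2 * π, azimuthalMode i α = ![2 * π, 0, 0, 0, π, 0, 0] i := by
  fin_cases i
  · simp [azimuthalMode]
  · simpa [azimuthalMode] using integral_cos_int_mul_zero_two_pi (k := 2) two_ne_zero
  · simpa [azimuthalMode] using integral_sin_int_mul_zero_two_pi 2
  · simpa [azimuthalMode] using integral_cos_int_mul_zero_two_pi (k := 4) four_ne_zero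
  · simpa [azimuthalMode] using integral_cos_mul_self_zero_two_pi (n := 2) two_ne_zero
  · simpa [azimuthalMode] using
      integral_cos_mul_cos_zero_two_pi (m := 2) (n := 4) (by norm_num) (by norm_num)
  · simpa [azimuthalMode] using integral_cos_mul_sin_zero_two_pi 2 2

/-- `K`, `L`, `M` are the coefficients of `cos 2α sin²β`, `cos 4α sin⁴β` and `sin 2α sin²β`
in `Pexp`. -/
noncomputable def stressCoeff (B c₂ c₃ : ℝ) : Fin 7 → Fin 4 → ℝ :=
  let K := c₂ * B ^ 2 - 3 * B / (8 * π)
  let L := 3 * B ^ 2 / (16 * π)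
  let M := c₃ * B ^ 2
  ![![-1 / (4 * π), 3 / (8 * π), 0, 0],
    ![0, -1 / (8 * π) - K, 3 * K / 2, 0],
    ![0, -M, 3 * M / 2, 0],
    ![0, 0, -L, 3 * L / 2],
    ![0, 0, -K / 2, 0],
    ![0, 0, 0, -L / 2],
    ![0, 0, -M / 2, 0]]

theorem stress_integrand_eq_sum (B c₂ c₃ α β : ℝ) :
    ((sin α * sin β) ^ 2 - cos β ^ 2) * Pexp B c₂ c₃ α β * sin β
      = ∑ i, ∑ k : Fin 4,
          stressCoeff B c₂ c₃ i k * azimuthalMode i α * sin β ^ (2 * (k : ℕ) + 1) := by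
  rw [mul_pow, sin_sq_eq_half_sub α, cos_sq' β]
  simp only [Fin.sum_univ_four, Fin.sum_univ_seven, stressCoeff, azimuthalMode, Pexp,
    Matrix.cons_val, Fin.coe_ofNat_eq_mod, Nat.reduceMod]
  ring

/-- The second normal stress integral: the sphere average of
`d₂² − d₃²` against the truncated expansion `P` equals
`(1/5)B − (8π/15) c₂ B²`. -/
theorem second_normal_stress_average (B c₂ c₃ : ℝ) :
    (∫ α in (0:ℝ)..(2 * Real.pi), ∫ β in (0:ℝ)..Real.pi,
        ((Real.sin α * Real.sin β) ^ 2 - Real.cos β ^ 2)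
          * Pexp B c₂ c₃ α β * Real.sin β)
      = 1 / 5 * B - 8 * Real.pi / 15 * c₂ * B ^ 2 := by
  simp_rw [stress_integrand_eq_sum]
  rw [integral_integral_sum_sum_mul _ _ _ continuous_azimuthalMode (fun k => by fun_prop)]
  simp only [Fin.sum_univ_four, Fin.sum_univ_seven, integral_azimuthalMode, integral_sin_pow_odd,
    stressCoeff, Matrix.cons_val, Fin.coe_ofNat_eq_mod, Nat.reduceMod,
    Finset.prod_range_succ]
  field_simp
  ring
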